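/- arXiv:2504.00666 — 2 statements merged into one kernel-verified Lean document; each statement's English description precedes it below -/
import Mathlib

section
/- Let S ∈ ℝ^{(N−1)×(N−1)} be the symmetric tridiagonal matrix with diagonal entries β_i = 1/σ_i − α_i − α_{i+1} and off-diagonal entries α_{i+1} > 0, where α_i = 1/(12 σ̂_{i−1/2}) and σ_i, σ̂_{i±1/2} > 0. If for every i, (2−δ_{i,1})(σ_i/σ̂_{i−1/2}) /12 + (2−δ_{i,N−1})(σ_i/σ̂_{i+1/2})/12 ≤ 1, with strict inequality for at least one i, then S is weakly diagonally dominant and irreducible, hence nonsingular. -/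
/-- Taussky-type nonsingularity for the generalized Numerov operator: the symmetric
tridiagonal matrix with diagonal `β_i = 1/σ_i - α_i - α_{i+1}`, off-diagonals
`α_{i+1} > 0` (`α_i = 1/(12 σ̂_{i-1/2})`), is nonsingular provided
`(2-δ_{i,1})(σ_i/σ̂_{i-1/2})/12 + (2-δ_{i,N-1})(σ_i/σ̂_{i+1/2})/12 ≤ 1` for every `i`,
with strict inequality for at least one `i`. Here indices run over `Fin n`
(0-based interior nodes, `n = N-1`). -/
theorem generalized_numerov_nonsingular
    (n : ℕ) (hn : 2 ≤ n) (σ : Fin n → ℝ) (σh : Fin (n+1) → ℝ)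
    (hσ : ∀ i, 0 < σ i) (hσh : ∀ i, 0 < σh i)
    (α : Fin (n+1) → ℝ) (hα : ∀ i, α i = 1 / (12 * σh i))
    (S : Matrix (Fin n) (Fin n) ℝ)
    (hS : ∀ i j : Fin n, S i j =
      if i = j then 1 / σ i - α i.castSucc - α i.succ
      else if (i : ℕ) + 1 = (j : ℕ) then α i.succ
      else if (j : ℕ) + 1 = (i : ℕ) then α j.succ
      else 0)
    (hdom : ∀ i : Fin n,
      (2 - (if (i : ℕ) = 0 then (1:ℝ) else 0)) * (σ i / σh i.castSucc) / 12
        + (2 - (if (i : ℕ) = n - 1 then (1:ℝ) else 0)) * (σ i / σh i.succ) / 12 ≤ 1)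
    (hstrict : ∃ i : Fin n,
      (2 - (if (i : ℕ) = 0 then (1:ℝ) else 0)) * (σ i / σh i.castSucc) / 12
        + (2 - (if (i : ℕ) = n - 1 then (1:ℝ) else 0)) * (σ i / σh i.succ) / 12 < 1) :
    S.det ≠ 0 := by
  classical
  -- positivity of α
  have hαpos : ∀ i : Fin (n+1), 0 < α i := by
    intro i; rw [hα]; have := hσh i; positivity
  -- Rescale the dominance hypothesis by 1/σ i.
  have hscale : ∀ i : Fin n,
      (2 - (if (i : ℕ) = 0 then (1:ℝ) else 0)) * (σ i / σh i.castSucc) / 12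
        + (2 - (if (i : ℕ) = n - 1 then (1:ℝ) else 0)) * (σ i / σh i.succ) / 12
      = ((2 - (if (i : ℕ) = 0 then (1:ℝ) else 0)) * α i.castSucc
        + (2 - (if (i : ℕ) = n - 1 then (1:ℝ) else 0)) * α i.succ) * σ i := by
    intro i
    have h1 : σh i.castSucc ≠ 0 := (hσh i.castSucc).ne'
    have h2 : σh i.succ ≠ 0 := (hσh i.succ).ne'
    rw [hα, hα]
    field_simp
  have key : ∀ i : Fin n,
      (2 - (if (i : ℕ) = 0 then (1:ℝ) else 0)) * α i.castSucc
        + (2 - (if (i : ℕ) = n - 1 then (1:ℝ) else 0)) * α i.succ ≤ 1 / σ i := by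
    intro i
    have h := hdom i
    rw [hscale i] at h
    have hσi : (0:ℝ) < σ i := hσ i
    have h1 : (1 / σ i) * σ i = 1 := by field_simp
    have h2 : ((2 - (if (i : ℕ) = 0 then (1:ℝ) else 0)) * α i.castSucc
        + (2 - (if (i : ℕ) = n - 1 then (1:ℝ) else 0)) * α i.succ) * σ i
        ≤ (1 / σ i) * σ i := by rw [h1]; exact h
    exact le_of_mul_le_mul_right h2 hσi
  obtain ⟨i₀, hi₀⟩ := hstrict
  have keystrict :
      (2 - (if (i₀ : ℕ) = 0 then (1:ℝ) else 0)) * α i₀.castSucc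
        + (2 - (if (i₀ : ℕ) = n - 1 then (1:ℝ) else 0)) * α i₀.succ < 1 / σ i₀ := by
    have h := hi₀
    rw [hscale i₀] at h
    have hσi : (0:ℝ) < σ i₀ := hσ i₀
    have h1 : (1 / σ i₀) * σ i₀ = 1 := by field_simp
    have h2 : ((2 - (if (i₀ : ℕ) = 0 then (1:ℝ) else 0)) * α i₀.castSucc
        + (2 - (if (i₀ : ℕ) = n - 1 then (1:ℝ) else 0)) * α i₀.succ) * σ i₀
        < (1 / σ i₀) * σ i₀ := by rw [h1]; exact h
    exact lt_of_mul_lt_mul_right h2 hσi.le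
  -- natural-number indexed data
  set a : ℕ → ℝ := fun k => if h : k < n+1 then α ⟨k, h⟩ else 0 with ha_def
  set b : ℕ → ℝ := fun k => if h : k < n then 1 / σ ⟨k, h⟩ - a k - a (k+1) else 0 with hb_def
  set c : ℕ → ℝ := fun k => b k - (if 0 < k then a k else 0)
      - (if k < n - 1 then a (k+1) else 0) with hc_def
  have haC : ∀ i : Fin n, a (i : ℕ) = α i.castSucc := by
    intro i
    have h : (i : ℕ) < n + 1 := by omega
    simp only [ha_def, dif_pos h]
    congr 1
  have haS : ∀ i : Fin n, a ((i : ℕ)+1) = α i.succ := by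
    intro i
    have h : (i : ℕ) + 1 < n + 1 := by omega
    simp only [ha_def, dif_pos h]
    congr 1
  have hbv : ∀ i : Fin n, b (i : ℕ) = 1 / σ i - a (i : ℕ) - a ((i : ℕ)+1) := by
    intro i
    simp only [hb_def, dif_pos i.isLt, Fin.eta]
  have hapos : ∀ k, k < n + 1 → 0 < a k := by
    intro k hk
    simp only [ha_def, dif_pos hk]
    exact hαpos _
  -- the key coefficient identity
  have hcv : ∀ i : Fin n, c (i : ℕ) =
      1 / σ i - ((2 - (if (i : ℕ) = 0 then (1:ℝ) else 0)) * α i.castSucc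
        + (2 - (if (i : ℕ) = n - 1 then (1:ℝ) else 0)) * α i.succ) := by
    intro i
    have hin := i.isLt
    simp only [hc_def, hbv i, haC i, haS i]
    split_ifs <;> first | ring1 | (exfalso; omega)
  have hc0 : ∀ i : Fin n, 0 ≤ c (i : ℕ) := by
    intro i; rw [hcv i]; linarith [key i]
  have hcstrict : 0 < c (i₀ : ℕ) := by
    rw [hcv i₀]; linarith [keystrict]
  set m := n - 1 with hm
  have hnm : n = m + 1 := by omega
  -- S is symmetric
  have hsym : S.IsHermitian := by
    show S.conjTranspose = S
    ext i j
    rw [Matrix.conjTranspose_apply, star_trivial, hS j i, hS i j]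
    rcases eq_or_ne i j with rfl | hij
    · simp
    · rw [if_neg (Ne.symm hij), if_neg hij]
      by_cases h2 : (i:ℕ)+1 = (j:ℕ)
      · have h3 : ¬ (j:ℕ)+1 = (i:ℕ) := by omega
        rw [if_neg h3, if_pos h2, if_pos h2]
      · by_cases h3 : (j:ℕ)+1 = (i:ℕ)
        · rw [if_pos h3, if_neg h2, if_pos h3]
        · rw [if_neg h3, if_neg h2, if_neg h2, if_neg h3]
  have hposdef : S.PosDef := by
    refine Matrix.PosDef.of_dotProduct_mulVec_pos hsym (fun x hx => ?_)
    have hstar : star x = x := funext fun k => star_trivial _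
    rw [hstar]
    set y : ℕ → ℝ := fun k => if h : k < n then x ⟨k, h⟩ else 0 with hy_def
    have hyv : ∀ i : Fin n, y (i:ℕ) = x i := fun i => by
      simp only [hy_def, dif_pos i.isLt, Fin.eta]
    have hyz : ∀ k, n ≤ k → y k = 0 := fun k hk => dif_neg (by omega)
    -- row computation
    have hrow : ∀ i : Fin n, (S.mulVec x) i =
        b (i:ℕ) * y (i:ℕ) + a ((i:ℕ)+1) * y ((i:ℕ)+1)
          + (if (i:ℕ) = 0 then 0 else a (i:ℕ) * y ((i:ℕ)-1)) := by
      intro i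
      have hsplit : ∀ j : Fin n, S i j * x j =
          (if i = j then (1 / σ i - α i.castSucc - α i.succ) * x j else 0)
        + (if (i:ℕ)+1 = (j:ℕ) then α i.succ * x j else 0)
        + (if (j:ℕ)+1 = (i:ℕ) then a (i:ℕ) * x j else 0) := by
        intro j
        rw [hS]
        rcases eq_or_ne i j with rfl | hij
        · rw [if_pos rfl, if_pos rfl, if_neg (by omega), if_neg (by omega)]; ring1
        · rw [if_neg hij, if_neg hij]
          by_cases h2 : (i:ℕ)+1 = (j:ℕ)
          · rw [if_pos h2, if_pos h2, if_neg (by omega)]; ring1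
          · rw [if_neg h2, if_neg h2]
            by_cases h3 : (j:ℕ)+1 = (i:ℕ)
            · rw [if_pos h3, if_pos h3]
              have hv : α j.succ = a (i:ℕ) := by rw [← h3, haS j]
              rw [hv]; ring1
            · rw [if_neg h3, if_neg h3]; ring1
      have hmv : (S.mulVec x) i = ∑ j, S i j * x j := rfl
      rw [hmv, Finset.sum_congr rfl fun j _ => hsplit j,
        Finset.sum_add_distrib, Finset.sum_add_distrib]
      have s1 : ∑ j : Fin n, (if i = j then (1 / σ i - α i.castSucc - α i.succ) * x j else 0)
          = b (i:ℕ) * y (i:ℕ) := by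
        rw [Finset.sum_ite_eq, if_pos (Finset.mem_univ i), hbv i, haC i, haS i, hyv i]
      have s2 : ∑ j : Fin n, (if (i:ℕ)+1 = (j:ℕ) then α i.succ * x j else 0)
          = a ((i:ℕ)+1) * y ((i:ℕ)+1) := by
        by_cases h : (i:ℕ)+1 < n
        · rw [Finset.sum_eq_single_of_mem (⟨(i:ℕ)+1, h⟩ : Fin n) (Finset.mem_univ _)
            (fun j _ hj => if_neg (fun hc => hj (Fin.ext hc.symm)))]
          have hyy : y ((i:ℕ)+1) = x ⟨(i:ℕ)+1, h⟩ := dif_pos h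
          rw [if_pos rfl, haS i, hyy]
        · rw [Finset.sum_eq_zero fun j _ => if_neg (fun hc => by have := j.isLt; omega)]
          rw [hyz _ (by omega), mul_zero]
      have s3 : ∑ j : Fin n, (if (j:ℕ)+1 = (i:ℕ) then a (i:ℕ) * x j else 0)
          = (if (i:ℕ) = 0 then 0 else a (i:ℕ) * y ((i:ℕ)-1)) := by
        by_cases h : (i:ℕ) = 0
        · rw [if_pos h, Finset.sum_eq_zero fun j _ => if_neg (by omega)]
        · rw [if_neg h]
          have hlt : (i:ℕ)-1 < n := by have := i.isLt; omega
          rw [Finset.sum_eq_single_of_mem (⟨(i:ℕ)-1, hlt⟩ : Fin n) (Finset.mem_univ _)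
            (fun j _ hj => if_neg (fun hc => hj (Fin.ext (by simp only; omega))))]
          have hyy : y ((i:ℕ)-1) = x ⟨(i:ℕ)-1, hlt⟩ := dif_pos hlt
          rw [if_pos (by simp only; omega), hyy]
      rw [s1, s2, s3]
    have hQ0 : dotProduct x (S.mulVec x) = ∑ i : Fin n, x i * (S.mulVec x) i := rfl
    have hQ1 : dotProduct x (S.mulVec x) = ∑ k ∈ Finset.range n,
        y k * (b k * y k + a (k+1) * y (k+1) + (if k = 0 then 0 else a k * y (k-1))) := by
      rw [hQ0, ← Fin.sum_univ_eq_sum_range]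
      refine Finset.sum_congr rfl fun i _ => ?_
      rw [hrow i, ← hyv i]
    have hgsplit : ∑ k ∈ Finset.range n,
        y k * (b k * y k + a (k+1) * y (k+1) + (if k = 0 then 0 else a k * y (k-1)))
      = (∑ k ∈ Finset.range n, b k * y k^2)
        + (∑ k ∈ Finset.range n, a (k+1) * y k * y (k+1))
        + (∑ k ∈ Finset.range n, (if k = 0 then 0 else a k * y k * y (k-1))) := by
      rw [← Finset.sum_add_distrib, ← Finset.sum_add_distrib]
      refine Finset.sum_congr rfl fun k _ => ?_
      split_ifs <;> ring1
    have hT2 : ∑ k ∈ Finset.range n, a (k+1) * y k * y (k+1)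
        = ∑ k ∈ Finset.range m, a (k+1) * y k * y (k+1) := by
      rw [hnm, Finset.sum_range_succ, hyz (m+1) (by omega), mul_zero, add_zero]
    have hT3 : ∑ k ∈ Finset.range n, (if k = 0 then 0 else a k * y k * y (k-1))
        = ∑ k ∈ Finset.range m, a (k+1) * y k * y (k+1) := by
      rw [hnm, Finset.sum_range_succ', if_pos rfl, add_zero]
      refine Finset.sum_congr rfl fun k _ => ?_
      rw [if_neg (Nat.succ_ne_zero k)]
      have e : k + 1 - 1 = k := by omega
      rw [e]; ring1
    have hE1 : ∑ k ∈ Finset.range n, (if 0 < k then a k else 0) * y k^2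
        = ∑ k ∈ Finset.range m, a (k+1) * y (k+1)^2 := by
      rw [hnm, Finset.sum_range_succ', if_neg (lt_irrefl 0), zero_mul, add_zero]
      refine Finset.sum_congr rfl fun k _ => ?_
      rw [if_pos (Nat.succ_pos k)]
    have hE2 : ∑ k ∈ Finset.range n, (if k < n - 1 then a (k+1) else 0) * y k^2
        = ∑ k ∈ Finset.range m, a (k+1) * y k^2 := by
      rw [hnm, Finset.sum_range_succ, if_neg (by omega), zero_mul, add_zero]
      refine Finset.sum_congr rfl fun k hk => ?_
      rw [if_pos (by have := Finset.mem_range.mp hk; omega)]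
    have hcsum : ∑ k ∈ Finset.range n, c k * y k^2
        = (∑ k ∈ Finset.range n, b k * y k^2)
          - (∑ k ∈ Finset.range n, (if 0 < k then a k else 0) * y k^2)
          - (∑ k ∈ Finset.range n, (if k < n-1 then a (k+1) else 0) * y k^2) := by
      rw [← Finset.sum_sub_distrib, ← Finset.sum_sub_distrib]
      refine Finset.sum_congr rfl fun k _ => ?_
      simp only [hc_def]; ring1
    have hE3 : ∑ k ∈ Finset.range m, a (k+1) * (y k + y (k+1))^2
        = (∑ k ∈ Finset.range m, a (k+1) * y k^2)
          + (∑ k ∈ Finset.range m, a (k+1) * y (k+1)^2)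
          + 2 * (∑ k ∈ Finset.range m, a (k+1) * y k * y (k+1)) := by
      rw [Finset.mul_sum, ← Finset.sum_add_distrib, ← Finset.sum_add_distrib]
      refine Finset.sum_congr rfl fun k _ => ?_
      ring1
    have hQfinal : dotProduct x (S.mulVec x)
        = (∑ k ∈ Finset.range n, c k * y k^2)
          + ∑ k ∈ Finset.range m, a (k+1) * (y k + y (k+1))^2 := by
      rw [hQ1, hgsplit, hT2, hT3, hcsum, hE1, hE2, hE3]
      ring1
    have hterm1 : ∀ k ∈ Finset.range n, 0 ≤ c k * y k^2 := fun k hk =>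
      mul_nonneg (hc0 ⟨k, Finset.mem_range.mp hk⟩) (sq_nonneg _)
    have hterm2 : ∀ k ∈ Finset.range m, 0 ≤ a (k+1) * (y k + y (k+1))^2 := fun k hk =>
      mul_nonneg (hapos (k+1) (by have := Finset.mem_range.mp hk; omega)).le (sq_nonneg _)
    by_contra hQle
    push_neg at hQle
    have hA : 0 ≤ ∑ k ∈ Finset.range n, c k * y k^2 := Finset.sum_nonneg hterm1
    have hB : 0 ≤ ∑ k ∈ Finset.range m, a (k+1) * (y k + y (k+1))^2 :=
      Finset.sum_nonneg hterm2
    rw [hQfinal] at hQle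
    have hAz : ∑ k ∈ Finset.range n, c k * y k^2 = 0 := le_antisymm (by linarith) hA
    have hBz : ∑ k ∈ Finset.range m, a (k+1) * (y k + y (k+1))^2 = 0 :=
      le_antisymm (by linarith) hB
    have hbond : ∀ k, k < m → y (k+1) = - y k := by
      intro k hk
      have h := (Finset.sum_eq_zero_iff_of_nonneg hterm2).mp hBz k (Finset.mem_range.mpr hk)
      have hap := hapos (k+1) (by omega)
      have hsq : (y k + y (k+1))^2 = 0 := by
        rcases mul_eq_zero.mp h with h' | h'
        · exact absurd h' hap.ne'
        · exact h'
      have := pow_eq_zero_iff (two_ne_zero) |>.mp hsq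
      linarith
    have hzero0 : y (i₀:ℕ) = 0 := by
      have h := (Finset.sum_eq_zero_iff_of_nonneg hterm1).mp hAz (i₀:ℕ)
        (Finset.mem_range.mpr i₀.isLt)
      rcases mul_eq_zero.mp h with h' | h'
      · exact absurd h' hcstrict.ne'
      · exact pow_eq_zero_iff (two_ne_zero) |>.mp h'
    have hsqconst : ∀ k, k < n → y k^2 = y 0^2 := by
      intro k
      induction k with
      | zero => intro _; rfl
      | succ k ih =>
        intro hk
        have hk' : k < m := by omega
        rw [hbond k hk', neg_sq]
        exact ih (by omega)
    have hyall : ∀ k, k < n → y k = 0 := by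
      intro k hk
      have h1 : y 0 ^ 2 = 0 := by
        rw [← hsqconst (i₀:ℕ) i₀.isLt, hzero0]; ring1
      have h2 : y k ^ 2 = 0 := by rw [hsqconst k hk, h1]
      exact pow_eq_zero_iff (two_ne_zero) |>.mp h2
    apply hx
    funext i
    rw [← hyv i]
    exact hyall _ i.isLt
  exact hposdef.det_pos.ne'
end

section
/- Let σ ∈ C⁴ near x_i be positive, and define r_i(h) = σ̂_{i−1/2}σ̂_{i+1/2}/((σ̂_{i−1/2}+σ̂_{i+1/2})/2) − σ(x_i) with σ̂_{i±1/2} = σ(x_i ± h/2). Then r_{i−1}(h), r_i(h), r_{i+1}(h) are each O(h²), the first differences r_{i+1}−r_i and r_i−r_{i−1} are O(h³), and the second difference r_{i+1}−2r_i+r_{i−1} is O(h⁴), as h → 0. -/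
set_option maxHeartbeats 1000000


/-- `r(t,h)`: difference between the harmonic mean of `σ(t-h/2)`, `σ(t+h/2)`
and `σ(t)`. -/
noncomputable def harmDiff (σ : ℝ → ℝ) (t h : ℝ) : ℝ :=
  σ (t - h/2) * σ (t + h/2) / ((σ (t - h/2) + σ (t + h/2)) / 2) - σ t

/- Auxiliary helpers -/

lemma absMulLe {x y cx cy : ℝ} (hx : |x| ≤ cx) (hy : |y| ≤ cy) : |x * y| ≤ cx * cy := by
  rw [abs_mul]
  exact mul_le_mul hx hy (abs_nonneg _) ((abs_nonneg _).trans hx)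

lemma absAddLe {x y cx cy : ℝ} (hx : |x| ≤ cx) (hy : |y| ≤ cy) : |x + y| ≤ cx + cy :=
  (abs_add_le _ _).trans (add_le_add hx hy)

lemma absSubLe {x y cx cy : ℝ} (hx : |x| ≤ cx) (hy : |y| ≤ cy) : |x - y| ≤ cx + cy := by
  rw [sub_eq_add_neg]
  exact (abs_add_le _ _).trans (add_le_add hx (by rwa [abs_neg]))

/-- Mean value inequality on a convex set. -/
lemma lipBound {f f' : ℝ → ℝ} {S : Set ℝ} (hconv : Convex ℝ S)
    (hd : ∀ y ∈ S, HasDerivAt f (f' y) y) {K : ℝ} (hb : ∀ y ∈ S, |f' y| ≤ K)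
    {p q : ℝ} (hp : p ∈ S) (hq : q ∈ S) : |f p - f q| ≤ K * |p - q| := by
  have := hconv.norm_image_sub_le_of_norm_hasDerivWithin_le
    (fun y hy => (hd y hy).hasDerivWithinAt)
    (fun y hy => by simpa [Real.norm_eq_abs] using hb y hy) hq hp
  simpa [Real.norm_eq_abs] using this

/-- Second-difference bound via two mean value arguments. -/
lemma secondDiffBound {f f' f'' : ℝ → ℝ} {c R K : ℝ} (hK : 0 ≤ K)
    (hd1 : ∀ y ∈ Metric.closedBall c R, HasDerivAt f (f' y) y)
    (hd2 : ∀ y ∈ Metric.closedBall c R, HasDerivAt f' (f'' y) y)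
    (hb : ∀ y ∈ Metric.closedBall c R, |f'' y| ≤ K)
    {t u : ℝ} (hu : 0 ≤ u) (hsub : Metric.closedBall t u ⊆ Metric.closedBall c R) :
    |f (t+u) + f (t-u) - 2*f t| ≤ 2*K*u^2 := by
  have hmem : ∀ τ : ℝ, τ ∈ Set.Icc (0:ℝ) u →
      (t+τ ∈ Metric.closedBall c R ∧ t-τ ∈ Metric.closedBall c R) := by
    intro τ hτ
    constructor <;> apply hsub <;> rw [Metric.mem_closedBall, Real.dist_eq]
    · rw [show t+τ-t = τ by ring, abs_of_nonneg hτ.1]; exact hτ.2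
    · rw [show t-τ-t = -τ by ring, abs_neg, abs_of_nonneg hτ.1]; exact hτ.2
  have hψd : ∀ τ ∈ Set.Icc (0:ℝ) u,
      HasDerivWithinAt (fun τ => f (t+τ) + f (t-τ) - 2*f t)
        (f' (t+τ) - f' (t-τ)) (Set.Icc (0:ℝ) u) τ := by
    intro τ hτ
    have h1 : HasDerivAt (fun τ => f (t+τ)) (f' (t+τ) * 1) τ :=
      HasDerivAt.comp τ (hd1 _ (hmem τ hτ).1) ((hasDerivAt_id τ).const_add t)
    have h2 : HasDerivAt (fun τ => f (t-τ)) (f' (t-τ) * (-1)) τ :=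
      HasDerivAt.comp τ (hd1 _ (hmem τ hτ).2) (((hasDerivAt_id τ).const_sub t))
    have h3 := ((h1.add h2).sub_const (2*f t)).hasDerivWithinAt (s := Set.Icc (0:ℝ) u)
    refine h3.congr_deriv ?_
    ring
  have hψb : ∀ τ ∈ Set.Icc (0:ℝ) u, ‖f' (t+τ) - f' (t-τ)‖ ≤ 2*K*u := by
    intro τ hτ
    rw [Real.norm_eq_abs]
    have hlip := lipBound (convex_closedBall c R) hd2 hb (hmem τ hτ).1 (hmem τ hτ).2
    calc |f' (t+τ) - f' (t-τ)| ≤ K * |t+τ - (t-τ)| := hlip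
      _ = K * (2*τ) := by
          rw [show t+τ-(t-τ) = 2*τ by ring, abs_of_nonneg (by linarith [hτ.1])]
      _ ≤ 2*K*u := by nlinarith [hτ.1, hτ.2]
  have key := (convex_Icc (0:ℝ) u).norm_image_sub_le_of_norm_hasDerivWithin_le hψd hψb
    (Set.left_mem_Icc.mpr hu) (Set.right_mem_Icc.mpr hu)
  have hψ0 : f (t+0) + f (t-0) - 2*f t = 0 := by rw [add_zero, sub_zero]; ring
  rw [hψ0, sub_zero, sub_zero, Real.norm_eq_abs, Real.norm_eq_abs, abs_of_nonneg hu] at key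
  calc |f (t+u) + f (t-u) - 2*f t| ≤ 2*K*u*u := key
    _ = 2*K*u^2 := by ring

/- Rational-function identities used for the representation of `harmDiff` and its
`t`-derivatives in terms of small increments. -/

lemma rep1 (A B S : ℝ) (hM : A + B ≠ 0) :
    A*B/((A+B)/2) - S = (S*(A + B - 2*S) + 2*((A - S)*(B - S)))/(A + B) := by
  field_simp
  ring

lemma rep2 (A B S A1 B1 S1 : ℝ) (hM : A + B ≠ 0) :
    (A1*B^2 + A^2*B1)*2/(A+B)^2 - S1
    = (S1*((B - A)*(B - A)) + (2*((A1 + B1 - 2*S1)*(S*S))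
        + (2*((A1 - S1)*((B - S)*(B + S))) + 2*((B1 - S1)*((A - S)*(A + S))))))
      /((A + B)*(A + B)) := by
  field_simp
  ring

lemma repD1 (A B A1 B1 S1 : ℝ) (hM : A + B ≠ 0) :
    ((A1*B + A*B1) * ((A+B)/2) - A*B*((A1+B1)/2)) / ((A+B)/2)^2 - S1
    = (A1*B^2 + A^2*B1)*2/(A+B)^2 - S1 := by
  field_simp
  ring

lemma repD2 (A B S A1 B1 A2 B2 S2 : ℝ) (hM : A + B ≠ 0) :
    ((A2*B^2 + A1*(((2:ℕ):ℝ)*B^(2-1)*B1) + (((2:ℕ):ℝ)*A^(2-1)*A1*B1 + A^2*B2))*2*(A+B)^2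
      - (A1*B^2 + A^2*B1)*2*(((2:ℕ):ℝ)*(A+B)^(2-1)*(A1+B1))) / ((A+B)^2)^2 - S2
    = (S2*((A+B)*((B - A)*(B - A)))
        - 4*((A1*B - A*B1)*(A1*B - A*B1))
        + 2*((A+B)*((A2 + B2 - 2*S2)*(S*S)
            + ((A2 - S2)*((B - S)*(B + S)) + (B2 - S2)*((A - S)*(A + S))))))
      /((A + B)*((A + B)*(A + B))) := by
  norm_num
  field_simp
  ring

/-- For `σ` positive and `C⁴` near `x₀`, the quantity
`r_j = harmDiff σ (x₀ + j h) h` (`j ∈ {-1,0,1}`) is `O(h²)`, its first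
differences are `O(h³)`, and its second difference is `O(h⁴)`. -/
theorem harmDiff_orders
    (σ : ℝ → ℝ) (x₀ : ℝ) (s : Set ℝ) (hs : IsOpen s) (hx : x₀ ∈ s)
    (hσ : ContDiffOn ℝ 4 σ s) (hpos : ∀ y ∈ s, 0 < σ y) :
    ∃ C h₀ : ℝ, 0 < C ∧ 0 < h₀ ∧ ∀ h : ℝ, 0 < h → h ≤ h₀ →
      |harmDiff σ (x₀ - h) h| ≤ C * h^2 ∧
      |harmDiff σ x₀ h| ≤ C * h^2 ∧
      |harmDiff σ (x₀ + h) h| ≤ C * h^2 ∧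
      |harmDiff σ (x₀ + h) h - harmDiff σ x₀ h| ≤ C * h^3 ∧
      |harmDiff σ x₀ h - harmDiff σ (x₀ - h) h| ≤ C * h^3 ∧
      |harmDiff σ (x₀ + h) h - 2 * harmDiff σ x₀ h + harmDiff σ (x₀ - h) h| ≤ C * h^4 := by
  -- Choose a closed ball inside `s`
  obtain ⟨δ, hδ0, hδ⟩ := Metric.isOpen_iff.mp hs x₀ hx
  obtain ⟨ε, hε0, hεδ⟩ : ∃ ε : ℝ, 0 < ε ∧ 8*ε ≤ δ := ⟨δ/8, by linarith, by linarith⟩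
  have hBs : Metric.closedBall x₀ (3*ε) ⊆ s := by
    intro y hy
    apply hδ
    rw [Metric.mem_ball, Real.dist_eq]
    rw [Metric.mem_closedBall, Real.dist_eq] at hy
    linarith
  have hBcpt : IsCompact (Metric.closedBall x₀ (3*ε)) := isCompact_closedBall _ _
  -- iterated derivatives of σ, as opaque functions
  obtain ⟨g1, hg1def⟩ : ∃ g : ℝ → ℝ, g = deriv σ := ⟨_, rfl⟩
  obtain ⟨g2, hg2def⟩ : ∃ g : ℝ → ℝ, g = deriv g1 := ⟨_, rfl⟩
  obtain ⟨g3, hg3def⟩ : ∃ g : ℝ → ℝ, g = deriv g2 := ⟨_, rfl⟩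
  obtain ⟨g4, hg4def⟩ : ∃ g : ℝ → ℝ, g = deriv g3 := ⟨_, rfl⟩
  have hc1 : ContDiffOn ℝ 3 g1 s := by
    rw [hg1def]; exact hσ.deriv_of_isOpen hs (by norm_num)
  have hc2 : ContDiffOn ℝ 2 g2 s := by
    rw [hg2def]; exact hc1.deriv_of_isOpen hs (by norm_num)
  have hc3 : ContDiffOn ℝ 1 g3 s := by
    rw [hg3def]; exact hc2.deriv_of_isOpen hs (by norm_num)
  have hc4 : ContDiffOn ℝ 0 g4 s := by
    rw [hg4def]; exact hc3.deriv_of_isOpen hs (by norm_num)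
  have hd01 : ∀ y ∈ Metric.closedBall x₀ (3*ε), HasDerivAt σ (g1 y) y := by
    intro y hy
    rw [hg1def]
    exact (((hσ.differentiableOn (by norm_num)) y (hBs hy)).differentiableAt
      (hs.mem_nhds (hBs hy))).hasDerivAt
  have hd12 : ∀ y ∈ Metric.closedBall x₀ (3*ε), HasDerivAt g1 (g2 y) y := by
    intro y hy
    rw [hg2def]
    exact (((hc1.differentiableOn (by norm_num)) y (hBs hy)).differentiableAt
      (hs.mem_nhds (hBs hy))).hasDerivAt
  have hd23 : ∀ y ∈ Metric.closedBall x₀ (3*ε), HasDerivAt g2 (g3 y) y := by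
    intro y hy
    rw [hg3def]
    exact (((hc2.differentiableOn (by norm_num)) y (hBs hy)).differentiableAt
      (hs.mem_nhds (hBs hy))).hasDerivAt
  have hd34 : ∀ y ∈ Metric.closedBall x₀ (3*ε), HasDerivAt g3 (g4 y) y := by
    intro y hy
    rw [hg4def]
    exact (((hc3.differentiableOn (by norm_num)) y (hBs hy)).differentiableAt
      (hs.mem_nhds (hBs hy))).hasDerivAt
  -- global bound K
  obtain ⟨K0, hK0b⟩ := hBcpt.exists_bound_of_continuousOn (hσ.continuousOn.mono hBs)
  obtain ⟨K1, hK1b⟩ := hBcpt.exists_bound_of_continuousOn (hc1.continuousOn.mono hBs)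
  obtain ⟨K2, hK2b⟩ := hBcpt.exists_bound_of_continuousOn (hc2.continuousOn.mono hBs)
  obtain ⟨K3, hK3b⟩ := hBcpt.exists_bound_of_continuousOn (hc3.continuousOn.mono hBs)
  obtain ⟨K4, hK4b⟩ := hBcpt.exists_bound_of_continuousOn (hc4.continuousOn.mono hBs)
  obtain ⟨K, hKdef⟩ : ∃ K : ℝ, K = 1 + (|K0| + |K1| + |K2| + |K3| + |K4|) := ⟨_, rfl⟩
  have hK1' : 1 ≤ K := by
    rw [hKdef]
    have := abs_nonneg K0; have := abs_nonneg K1; have := abs_nonneg K2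
    have := abs_nonneg K3; have := abs_nonneg K4
    linarith
  have hK0' : 0 < K := by linarith
  have hb0 : ∀ y ∈ Metric.closedBall x₀ (3*ε), |σ y| ≤ K := by
    intro y hy
    have h' := hK0b y hy
    rw [Real.norm_eq_abs] at h'
    rw [hKdef]
    have := abs_nonneg K1; have := abs_nonneg K2; have := abs_nonneg K3; have := abs_nonneg K4
    linarith [le_abs_self K0]
  have hb1 : ∀ y ∈ Metric.closedBall x₀ (3*ε), |g1 y| ≤ K := by
    intro y hy
    have h' := hK1b y hy
    rw [Real.norm_eq_abs] at h'
    rw [hKdef]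
    have := abs_nonneg K0; have := abs_nonneg K2; have := abs_nonneg K3; have := abs_nonneg K4
    linarith [le_abs_self K1]
  have hb2 : ∀ y ∈ Metric.closedBall x₀ (3*ε), |g2 y| ≤ K := by
    intro y hy
    have h' := hK2b y hy
    rw [Real.norm_eq_abs] at h'
    rw [hKdef]
    have := abs_nonneg K0; have := abs_nonneg K1; have := abs_nonneg K3; have := abs_nonneg K4
    linarith [le_abs_self K2]
  have hb3 : ∀ y ∈ Metric.closedBall x₀ (3*ε), |g3 y| ≤ K := by
    intro y hy
    have h' := hK3b y hy
    rw [Real.norm_eq_abs] at h'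
    rw [hKdef]
    have := abs_nonneg K0; have := abs_nonneg K1; have := abs_nonneg K2; have := abs_nonneg K4
    linarith [le_abs_self K3]
  have hb4 : ∀ y ∈ Metric.closedBall x₀ (3*ε), |g4 y| ≤ K := by
    intro y hy
    have h' := hK4b y hy
    rw [Real.norm_eq_abs] at h'
    rw [hKdef]
    have := abs_nonneg K0; have := abs_nonneg K1; have := abs_nonneg K2; have := abs_nonneg K3
    linarith [le_abs_self K4]
  -- positive lower bound m for σ
  have hBne : (Metric.closedBall x₀ (3*ε)).Nonempty := ⟨x₀, by rw [Metric.mem_closedBall, dist_self]; positivity⟩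
  obtain ⟨z, hzB, hzmin⟩ := hBcpt.exists_isMinOn hBne (hσ.continuousOn.mono hBs)
  obtain ⟨m', hm'def⟩ : ∃ x : ℝ, x = min (σ z) 1 := ⟨_, rfl⟩
  have hm0 : 0 < σ z := hpos z (hBs hzB)
  have hm'0 : 0 < m' := by rw [hm'def]; exact lt_min hm0 one_pos
  have hm'1 : m' ≤ 1 := by rw [hm'def]; exact min_le_right _ _
  have hmlow : ∀ y ∈ Metric.closedBall x₀ (3*ε), m' ≤ σ y := by
    intro y hy
    have h1 : σ z ≤ σ y := hzmin hy
    have h2 : m' ≤ σ z := by rw [hm'def]; exact min_le_left _ _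
    linarith
  obtain ⟨C₀, hC₀def⟩ : ∃ c : ℝ, c = 166*K^4/m'^3 := ⟨_, rfl⟩
  have hK4pos : 0 < K^4 := pow_pos hK0' 4
  have hC₀0 : 0 < C₀ := by
    rw [hC₀def]
    exact div_pos (by nlinarith) (pow_pos hm'0 3)
  refine ⟨2*C₀, min ε 1, by linarith, lt_min hε0 one_pos, ?_⟩
  intro h hh0 hhm
  have hhe : h ≤ ε := le_trans hhm (min_le_left _ _)
  have hh1 : h ≤ 1 := le_trans hhm (min_le_right _ _)
  have hm3 : (0:ℝ) < 2*m'^3 := by nlinarith [pow_pos hm'0 3]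
  have hhalf : 166*K^4*h^2/(2*m'^3) ≤ C₀*h^2 := by
    rw [div_le_iff₀ hm3]
    have e : C₀*h^2*(2*m'^3) = 332*(K^4*h^2) := by
      rw [hC₀def]; field_simp; ring
    rw [e]
    nlinarith [mul_nonneg hK4pos.le (sq_nonneg h)]
  have hKK : 1 ≤ K^2 := by nlinarith
  have hK24 : K^2 ≤ K^4 := by nlinarith [hKK, pow_pos hK0' 2]
  have hK34 : K^3 ≤ K^4 := by nlinarith [hKK, hK1', pow_pos hK0' 2, pow_pos hK0' 3]
  have hm'sq : m'^2 ≤ 1 := by nlinarith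
  have hmc : m'^3 ≤ m' := by
    have := pow_le_pow_of_le_one hm'0.le hm'1 (by norm_num : 1 ≤ 3)
    rwa [pow_one] at this
  have hmsq : m'^3 ≤ m'^2 := pow_le_pow_of_le_one hm'0.le hm'1 (by norm_num)
  -- the first and second derivative (in t) of harmDiff, as functions of the node
  obtain ⟨P, hPdef⟩ : ∃ P : ℝ → ℝ, P = fun w =>
      (g1 (w - h/2) * σ (w + h/2)^2 + σ (w - h/2)^2 * g1 (w + h/2)) * 2
        / (σ (w - h/2) + σ (w + h/2))^2 - g1 w := ⟨_, rfl⟩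
  obtain ⟨Q, hQdef⟩ : ∃ Q : ℝ → ℝ, Q = fun w =>
      (g2 w * ((σ (w - h/2) + σ (w + h/2)) * ((σ (w + h/2) - σ (w - h/2)) * (σ (w + h/2) - σ (w - h/2))))
        - 4*((g1 (w - h/2) * σ (w + h/2) - σ (w - h/2) * g1 (w + h/2)) * (g1 (w - h/2) * σ (w + h/2) - σ (w - h/2) * g1 (w + h/2)))
        + 2*((σ (w - h/2) + σ (w + h/2)) *
          ((g2 (w - h/2) + g2 (w + h/2) - 2*g2 w) * (σ w * σ w)
            + ((g2 (w - h/2) - g2 w) * ((σ (w + h/2) - σ w) * (σ (w + h/2) + σ w))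
              + (g2 (w + h/2) - g2 w) * ((σ (w - h/2) - σ w) * (σ (w - h/2) + σ w))))))
        / ((σ (w - h/2) + σ (w + h/2)) * ((σ (w - h/2) + σ (w + h/2)) * (σ (w - h/2) + σ (w + h/2)))) := ⟨_, rfl⟩
  have keys : ∀ t ∈ Metric.closedBall x₀ ε,
      |harmDiff σ t h| ≤ C₀*h^2 ∧ |P t| ≤ C₀*h^2 ∧ |Q t| ≤ C₀*h^2 ∧
      HasDerivAt (fun w => harmDiff σ w h) (P t) t ∧ HasDerivAt P (Q t) t := by
    intro t ht
    have htx : |t - x₀| ≤ ε := by rwa [Metric.mem_closedBall, Real.dist_eq] at ht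
    have hsubB : Metric.closedBall t (h/2) ⊆ Metric.closedBall x₀ (3*ε) := by
      intro y hy
      rw [Metric.mem_closedBall, Real.dist_eq] at hy ⊢
      have := abs_sub_le y t x₀
      linarith
    have hmB : t ∈ Metric.closedBall x₀ (3*ε) := hsubB (by rw [Metric.mem_closedBall, dist_self]; linarith)
    have hmBm : t - h/2 ∈ Metric.closedBall x₀ (3*ε) := hsubB (by
      rw [Metric.mem_closedBall, Real.dist_eq, show t - h/2 - t = -(h/2) by ring, abs_neg,
        abs_of_nonneg (by linarith : (0:ℝ) ≤ h/2)])
    have hmBp : t + h/2 ∈ Metric.closedBall x₀ (3*ε) := hsubB (by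
      rw [Metric.mem_closedBall, Real.dist_eq, show t + h/2 - t = h/2 by ring,
        abs_of_nonneg (by linarith : (0:ℝ) ≤ h/2)])
    have e1 : |t - h/2 - t| = h/2 := by
      rw [show t - h/2 - t = -(h/2) by ring, abs_neg, abs_of_nonneg (by linarith : (0:ℝ) ≤ h/2)]
    have e2 : |t + h/2 - t| = h/2 := by
      rw [show t + h/2 - t = h/2 by ring, abs_of_nonneg (by linarith : (0:ℝ) ≤ h/2)]
    have e3 : |t + h/2 - (t - h/2)| = h := by
      rw [show t + h/2 - (t - h/2) = h by ring, abs_of_nonneg hh0.le]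
    have hKpos : (0:ℝ) ≤ K := by linarith
    have hKh : (0:ℝ) ≤ K*h := mul_nonneg hKpos hh0.le
    have mvtK : ∀ (f f' : ℝ → ℝ), (∀ y ∈ Metric.closedBall x₀ (3*ε), HasDerivAt f (f' y) y) →
        (∀ y ∈ Metric.closedBall x₀ (3*ε), |f' y| ≤ K) →
        ∀ p, p ∈ Metric.closedBall x₀ (3*ε) → ∀ q, q ∈ Metric.closedBall x₀ (3*ε) → |f p - f q| ≤ K*|p - q| :=
      fun f f' hd hb p hp q hq => lipBound (convex_closedBall _ _) hd hb hp hq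
    have sdK : ∀ (f f' f'' : ℝ → ℝ), (∀ y ∈ Metric.closedBall x₀ (3*ε), HasDerivAt f (f' y) y) →
        (∀ y ∈ Metric.closedBall x₀ (3*ε), HasDerivAt f' (f'' y) y) → (∀ y ∈ Metric.closedBall x₀ (3*ε), |f'' y| ≤ K) →
        |f (t + h/2) + f (t - h/2) - 2*f t| ≤ K*h^2 := by
      intro f f' f'' hdd1 hdd2 hbb
      have := secondDiffBound (c := x₀) (R := 3*ε) hKpos hdd1 hdd2 hbb
        (by linarith : (0:ℝ) ≤ h/2) hsubB
      linarith [this, mul_nonneg hKpos (sq_nonneg h)]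
    -- value bounds
    have hbA : |σ (t - h/2)| ≤ K := hb0 _ hmBm
    have hbB : |σ (t + h/2)| ≤ K := hb0 _ hmBp
    have hbST : |σ t| ≤ K := hb0 _ hmB
    have hbA1 : |g1 (t - h/2)| ≤ K := hb1 _ hmBm
    have hbB1 : |g1 (t + h/2)| ≤ K := hb1 _ hmBp
    have hbS1 : |g1 t| ≤ K := hb1 _ hmB
    have hbS2 : |g2 t| ≤ K := hb2 _ hmB
    -- increment bounds
    have halA : |σ (t - h/2) - σ t| ≤ K*h := by
      have := mvtK σ g1 hd01 hb1 _ hmBm _ hmB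
      rw [e1] at this
      linarith
    have halB : |σ (t + h/2) - σ t| ≤ K*h := by
      have := mvtK σ g1 hd01 hb1 _ hmBp _ hmB
      rw [e2] at this
      linarith
    have hal1A : |g1 (t - h/2) - g1 t| ≤ K*h := by
      have := mvtK g1 g2 hd12 hb2 _ hmBm _ hmB
      rw [e1] at this
      linarith
    have hal1B : |g1 (t + h/2) - g1 t| ≤ K*h := by
      have := mvtK g1 g2 hd12 hb2 _ hmBp _ hmB
      rw [e2] at this
      linarith
    have hal2A : |g2 (t - h/2) - g2 t| ≤ K*h := by
      have := mvtK g2 g3 hd23 hb3 _ hmBm _ hmB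
      rw [e1] at this
      linarith
    have hal2B : |g2 (t + h/2) - g2 t| ≤ K*h := by
      have := mvtK g2 g3 hd23 hb3 _ hmBp _ hmB
      rw [e2] at this
      linarith
    have hd0 : |σ (t + h/2) - σ (t - h/2)| ≤ K*h := by
      have := mvtK σ g1 hd01 hb1 _ hmBp _ hmBm
      rw [e3] at this
      linarith
    -- second differences
    have hs0 : |σ (t - h/2) + σ (t + h/2) - 2*σ t| ≤ K*h^2 := by
      have := sdK σ g1 g2 hd01 hd12 hb2
      rw [show σ (t + h/2) + σ (t - h/2) - 2*σ t = σ (t - h/2) + σ (t + h/2) - 2*σ t by ring] at this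
      exact this
    have hs1 : |g1 (t - h/2) + g1 (t + h/2) - 2*g1 t| ≤ K*h^2 := by
      have := sdK g1 g2 g3 hd12 hd23 hb3
      rw [show g1 (t + h/2) + g1 (t - h/2) - 2*g1 t = g1 (t - h/2) + g1 (t + h/2) - 2*g1 t by ring] at this
      exact this
    have hs2 : |g2 (t - h/2) + g2 (t + h/2) - 2*g2 t| ≤ K*h^2 := by
      have := sdK g2 g3 g4 hd23 hd34 hb4
      rw [show g2 (t + h/2) + g2 (t - h/2) - 2*g2 t = g2 (t - h/2) + g2 (t + h/2) - 2*g2 t by ring] at this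
      exact this
    -- denominator facts
    have hM : 2*m' ≤ σ (t - h/2) + σ (t + h/2) := by
      have h1 := hmlow _ hmBm
      have h2 := hmlow _ hmBp
      linarith
    have hMpos : 0 < σ (t - h/2) + σ (t + h/2) := by linarith
    have hMne : σ (t - h/2) + σ (t + h/2) ≠ 0 := ne_of_gt hMpos
    have htwo : |(2:ℝ)| ≤ 2 := by norm_num
    have hfour : |(4:ℝ)| ≤ 4 := by norm_num
    have hKKh2 : K^2*h^2 ≤ K^4*h^2 := mul_le_mul_of_nonneg_right hK24 (sq_nonneg h)
    have hKKh3 : K^3*h^2 ≤ K^4*h^2 := mul_le_mul_of_nonneg_right hK34 (sq_nonneg h)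
    have hK4h2 : (0:ℝ) ≤ K^4*h^2 := mul_nonneg hK4pos.le (sq_nonneg h)
    -- (1) bound on harmDiff
    have key1 : |harmDiff σ t h| ≤ C₀*h^2 := by
      have hrep : harmDiff σ t h
          = (σ t*(σ (t - h/2) + σ (t + h/2) - 2*σ t) + 2*((σ (t - h/2) - σ t)*(σ (t + h/2) - σ t)))/(σ (t - h/2) + σ (t + h/2)) := by
        simp only [harmDiff]
        exact rep1 _ _ _ hMne
      have hnum := absAddLe (absMulLe hbST hs0) (absMulLe htwo (absMulLe halA halB))
      have hnum' : |σ t*(σ (t - h/2) + σ (t + h/2) - 2*σ t) + 2*((σ (t - h/2) - σ t)*(σ (t + h/2) - σ t))|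
          ≤ 166*K^4*h^2 := by linarith [hnum, hKKh2, hK4h2]
      have hden : 2*m'^3 ≤ σ (t - h/2) + σ (t + h/2) := by linarith
      rw [hrep, abs_div, abs_of_pos hMpos]
      calc |σ t*(σ (t - h/2) + σ (t + h/2) - 2*σ t) + 2*((σ (t - h/2) - σ t)*(σ (t + h/2) - σ t))| / (σ (t - h/2) + σ (t + h/2))
          ≤ 166*K^4*h^2/(2*m'^3) := div_le_div₀ (by linarith) hnum' hm3 hden
        _ ≤ C₀*h^2 := hhalf
    -- (2) bound on P
    have key2 : |P t| ≤ C₀*h^2 := by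
      have hPt : P t = (g1 t*((σ (t + h/2) - σ (t - h/2))*(σ (t + h/2) - σ (t - h/2)))
          + (2*((g1 (t - h/2) + g1 (t + h/2) - 2*g1 t)*(σ t*σ t))
          + (2*((g1 (t - h/2) - g1 t)*((σ (t + h/2) - σ t)*(σ (t + h/2) + σ t)))
          + 2*((g1 (t + h/2) - g1 t)*((σ (t - h/2) - σ t)*(σ (t - h/2) + σ t))))))/((σ (t - h/2) + σ (t + h/2))*(σ (t - h/2) + σ (t + h/2))) := by
        rw [hPdef]
        exact rep2 _ _ _ _ _ _ hMne
      have hT1 := absMulLe hbS1 (absMulLe hd0 hd0)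
      have hT2 := absMulLe htwo (absMulLe hs1 (absMulLe hbST hbST))
      have hT3 := absMulLe htwo (absMulLe hal1A (absMulLe halB (absAddLe hbB hbST)))
      have hT4 := absMulLe htwo (absMulLe hal1B (absMulLe halA (absAddLe hbA hbST)))
      have hnum := absAddLe hT1 (absAddLe hT2 (absAddLe hT3 hT4))
      have hnum' : |g1 t*((σ (t + h/2) - σ (t - h/2))*(σ (t + h/2) - σ (t - h/2)))
          + (2*((g1 (t - h/2) + g1 (t + h/2) - 2*g1 t)*(σ t*σ t))
          + (2*((g1 (t - h/2) - g1 t)*((σ (t + h/2) - σ t)*(σ (t + h/2) + σ t)))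
          + 2*((g1 (t + h/2) - g1 t)*((σ (t - h/2) - σ t)*(σ (t - h/2) + σ t)))))| ≤ 166*K^4*h^2 := by
        linarith [hnum, hKKh3, hK4h2]
      have hden : 2*m'^3 ≤ (σ (t - h/2) + σ (t + h/2))*(σ (t - h/2) + σ (t + h/2)) := by
        have hx := mul_le_mul hM hM (by linarith) (by linarith)
        linarith [hx, hmsq, sq_nonneg m']
      rw [hPt, abs_div, abs_of_pos (mul_pos hMpos hMpos)]
      calc _ ≤ 166*K^4*h^2/(2*m'^3) := div_le_div₀ (by linarith) hnum' hm3 hden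
        _ ≤ C₀*h^2 := hhalf
    -- (3) bound on Q
    have key3 : |Q t| ≤ C₀*h^2 := by
      have hw : |g1 (t - h/2)*σ (t + h/2) - σ (t - h/2)*g1 (t + h/2)| ≤ 6*(K*K)*h := by
        have hid : g1 (t - h/2)*σ (t + h/2) - σ (t - h/2)*g1 (t + h/2)
            = g1 t*((σ (t + h/2) - σ t) - (σ (t - h/2) - σ t))
              + (σ t*((g1 (t - h/2) - g1 t) - (g1 (t + h/2) - g1 t))
              + ((g1 (t - h/2) - g1 t)*(σ (t + h/2) - σ t) - (σ (t - h/2) - σ t)*(g1 (t + h/2) - g1 t))) := by ring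
        rw [hid]
        have hb' := absAddLe (absMulLe hbS1 (absSubLe halB halA))
          (absAddLe (absMulLe hbST (absSubLe hal1A hal1B))
            (absSubLe (absMulLe hal1A halB) (absMulLe halA hal1B)))
        have hx : K*K*h*h ≤ K*K*h*1 :=
          mul_le_mul_of_nonneg_left hh1 (mul_nonneg (mul_nonneg hKpos hKpos) hh0.le)
        linarith [hb', hx]
      have hT1 := absMulLe hbS2 (absMulLe (absAddLe hbA hbB) (absMulLe hd0 hd0))
      have hT2 := absMulLe hfour (absMulLe hw hw)
      have hT3 := absMulLe htwo (absMulLe (absAddLe hbA hbB)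
        (absAddLe (absMulLe hs2 (absMulLe hbST hbST))
          (absAddLe (absMulLe hal2A (absMulLe halB (absAddLe hbB hbST)))
            (absMulLe hal2B (absMulLe halA (absAddLe hbA hbST))))))
      have hnum := absAddLe (absSubLe hT1 hT2) hT3
      have hQt : Q t = (g2 t * ((σ (t - h/2) + σ (t + h/2)) * ((σ (t + h/2) - σ (t - h/2)) * (σ (t + h/2) - σ (t - h/2))))
          - 4*((g1 (t - h/2) * σ (t + h/2) - σ (t - h/2) * g1 (t + h/2)) * (g1 (t - h/2) * σ (t + h/2) - σ (t - h/2) * g1 (t + h/2)))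
          + 2*((σ (t - h/2) + σ (t + h/2)) *
            ((g2 (t - h/2) + g2 (t + h/2) - 2*g2 t) * (σ t * σ t)
              + ((g2 (t - h/2) - g2 t) * ((σ (t + h/2) - σ t) * (σ (t + h/2) + σ t))
                + (g2 (t + h/2) - g2 t) * ((σ (t - h/2) - σ t) * (σ (t - h/2) + σ t))))))
          / ((σ (t - h/2) + σ (t + h/2)) * ((σ (t - h/2) + σ (t + h/2)) * (σ (t - h/2) + σ (t + h/2)))) := by
        rw [hQdef]
      have hnum' : |g2 t * ((σ (t - h/2) + σ (t + h/2)) * ((σ (t + h/2) - σ (t - h/2)) * (σ (t + h/2) - σ (t - h/2))))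
          - 4*((g1 (t - h/2) * σ (t + h/2) - σ (t - h/2) * g1 (t + h/2)) * (g1 (t - h/2) * σ (t + h/2) - σ (t - h/2) * g1 (t + h/2)))
          + 2*((σ (t - h/2) + σ (t + h/2)) *
            ((g2 (t - h/2) + g2 (t + h/2) - 2*g2 t) * (σ t * σ t)
              + ((g2 (t - h/2) - g2 t) * ((σ (t + h/2) - σ t) * (σ (t + h/2) + σ t))
                + (g2 (t + h/2) - g2 t) * ((σ (t - h/2) - σ t) * (σ (t - h/2) + σ t)))))| ≤ 166*K^4*h^2 := by
        linarith [hnum, hK4h2]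
      have hden : 2*m'^3 ≤ (σ (t - h/2) + σ (t + h/2))*((σ (t - h/2) + σ (t + h/2))*(σ (t - h/2) + σ (t + h/2))) := by
        have hx := mul_le_mul hM (mul_le_mul hM hM (by linarith) (by linarith))
          (mul_nonneg (by linarith) (by linarith)) (by linarith)
        linarith [hx, pow_pos hm'0 3]
      rw [hQt, abs_div, abs_of_pos (mul_pos hMpos (mul_pos hMpos hMpos))]
      calc _ ≤ 166*K^4*h^2/(2*m'^3) := div_le_div₀ (by linarith) hnum' hm3 hden
        _ ≤ C₀*h^2 := hhalf
    -- derivative facts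
    have dA : HasDerivAt (fun w => σ (w - h/2)) (g1 (t - h/2)) t := by
      have hcomp := HasDerivAt.comp t (hd01 _ hmBm) ((hasDerivAt_id t).sub_const (h/2))
      simpa [Function.comp_def] using hcomp
    have dB : HasDerivAt (fun w => σ (w + h/2)) (g1 (t + h/2)) t := by
      have hcomp := HasDerivAt.comp t (hd01 _ hmBp) ((hasDerivAt_id t).add_const (h/2))
      simpa [Function.comp_def] using hcomp
    have dA1 : HasDerivAt (fun w => g1 (w - h/2)) (g2 (t - h/2)) t := by
      have hcomp := HasDerivAt.comp t (hd12 _ hmBm) ((hasDerivAt_id t).sub_const (h/2))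
      simpa [Function.comp_def] using hcomp
    have dB1 : HasDerivAt (fun w => g1 (w + h/2)) (g2 (t + h/2)) t := by
      have hcomp := HasDerivAt.comp t (hd12 _ hmBp) ((hasDerivAt_id t).add_const (h/2))
      simpa [Function.comp_def] using hcomp
    have dst : HasDerivAt σ (g1 t) t := hd01 _ hmB
    have dst1 : HasDerivAt g1 (g2 t) t := hd12 _ hmB
    have key4 : HasDerivAt (fun w => harmDiff σ w h) (P t) t := by
      have hne2 : (σ (t - h/2) + σ (t + h/2))/2 ≠ 0 := by
        intro hcon
        apply hMne
        linarith [hcon]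
      have hq := ((dA.mul dB).div ((dA.add dB).div_const 2) hne2).sub dst
      have hgoal : HasDerivAt
          (fun w => σ (w - h/2) * σ (w + h/2) / ((σ (w - h/2) + σ (w + h/2))/2) - σ w)
          (P t) t := by
        refine hq.congr_deriv ?_
        rw [hPdef]
        exact repD1 _ _ _ _ _ hMne
      exact hgoal
    have key5 : HasDerivAt P (Q t) t := by
      have hne3 : (σ (t - h/2) + σ (t + h/2))^2 ≠ 0 := pow_ne_zero 2 hMne
      have hq := (((dA1.mul (dB.pow 2)).add ((dA.pow 2).mul dB1)).mul_const 2).div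
        ((dA.add dB).pow 2) hne3
      have hq2 := hq.sub dst1
      rw [hPdef]
      refine hq2.congr_deriv ?_
      rw [hQdef]
      exact repD2 _ _ _ _ _ _ _ _ hMne
    exact ⟨key1, key2, key3, key4, key5⟩
  -- memberships of the three nodes
  have hmem0 : x₀ ∈ Metric.closedBall x₀ ε := by
    rw [Metric.mem_closedBall, dist_self]; linarith
  have hmemp : x₀ + h ∈ Metric.closedBall x₀ ε := by
    rw [Metric.mem_closedBall, Real.dist_eq, show x₀ + h - x₀ = h by ring,
      abs_of_nonneg hh0.le]
    exact hhe
  have hmemm : x₀ - h ∈ Metric.closedBall x₀ ε := by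
    rw [Metric.mem_closedBall, Real.dist_eq, show x₀ - h - x₀ = -h by ring, abs_neg,
      abs_of_nonneg hh0.le]
    exact hhe
  have hC0h2 : (0:ℝ) ≤ C₀*h^2 := mul_nonneg hC₀0.le (sq_nonneg h)
  have hC0h3 : (0:ℝ) ≤ C₀*h^2*h := mul_nonneg hC0h2 hh0.le
  have hdF : ∀ y ∈ Metric.closedBall x₀ ε, HasDerivAt (fun w => harmDiff σ w h) (P y) y :=
    fun y hy => (keys y hy).2.2.2.1
  have hbP : ∀ y ∈ Metric.closedBall x₀ ε, |P y| ≤ C₀*h^2 := fun y hy => (keys y hy).2.1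
  have hdP : ∀ y ∈ Metric.closedBall x₀ ε, HasDerivAt P (Q y) y :=
    fun y hy => (keys y hy).2.2.2.2
  have hbQ : ∀ y ∈ Metric.closedBall x₀ ε, |Q y| ≤ C₀*h^2 := fun y hy => (keys y hy).2.2.1
  refine ⟨?_, ?_, ?_, ?_, ?_, ?_⟩
  · calc |harmDiff σ (x₀ - h) h| ≤ C₀*h^2 := (keys _ hmemm).1
      _ ≤ 2*C₀*h^2 := by linarith
  · calc |harmDiff σ x₀ h| ≤ C₀*h^2 := (keys _ hmem0).1
      _ ≤ 2*C₀*h^2 := by linarith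
  · calc |harmDiff σ (x₀ + h) h| ≤ C₀*h^2 := (keys _ hmemp).1
      _ ≤ 2*C₀*h^2 := by linarith
  · have hlip := lipBound (convex_closedBall x₀ ε) hdF hbP hmemp hmem0
    rw [show x₀ + h - x₀ = h by ring, abs_of_nonneg hh0.le] at hlip
    calc |harmDiff σ (x₀ + h) h - harmDiff σ x₀ h| ≤ C₀*h^2*h := hlip
      _ ≤ 2*C₀*h^3 := by linarith [hC0h3]
  · have hlip := lipBound (convex_closedBall x₀ ε) hdF hbP hmem0 hmemm
    rw [show x₀ - (x₀ - h) = h by ring, abs_of_nonneg hh0.le] at hlip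
    calc |harmDiff σ x₀ h - harmDiff σ (x₀ - h) h| ≤ C₀*h^2*h := hlip
      _ ≤ 2*C₀*h^3 := by linarith [hC0h3]
  · have hsd := secondDiffBound (c := x₀) (R := ε) hC0h2 hdF hdP hbQ hh0.le
      (Metric.closedBall_subset_closedBall hhe)
    rw [show harmDiff σ (x₀ + h) h - 2*harmDiff σ x₀ h + harmDiff σ (x₀ - h) h
        = harmDiff σ (x₀ + h) h + harmDiff σ (x₀ - h) h - 2*harmDiff σ x₀ h by ring]
    calc |harmDiff σ (x₀ + h) h + harmDiff σ (x₀ - h) h - 2*harmDiff σ x₀ h|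
        ≤ 2*(C₀*h^2)*h^2 := hsd
      _ = 2*C₀*h^4 := by ring
end
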